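/- arXiv:2103.12711 — 5 statements merged into one kernel-verified Lean document; each statement's English description precedes it below -/
import Mathlib

section
/- Let p ≥ 1 and let D assign to every probability measure ρ on ℝ^d a measurable function D_ρ : ℝ^d → [0,1] satisfying affine invariance: D_{g♯ρ}(g(x)) = D_ρ(x) for every map g(x) = Ax + b with A ∈ ℝ^{d×d} invertible and b ∈ ℝ^d, every x ∈ ℝ^d and every probability measure ρ, where g♯ρ is the pushforward of ρ by g. Then for every such g and all probability measures μ, ν on ℝ^d, DD_p(g♯μ, g♯ν) = |det A|^{1/p} · DD_p(μ, ν). -/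
open MeasureTheory
open scoped ENNReal

/-! Affine invariance gives `D_μ = D_{g♯μ} ∘ g`, so both discrepancies integrate the same
function, once against Lebesgue measure and once against its pushforward by `g`, which is
`|det A|⁻¹` times Lebesgue measure. Taking `p`-th roots turns the factor into `|det A|^{1/p}`. -/

/-- The data-depth discrepancy `DD_p` between two depth functions, with values in `[0, ∞]`. -/
noncomputable def DDp (d : ℕ) (p : ℝ)
    (f g : EuclideanSpace ℝ (Fin d) → ℝ) : ℝ≥0∞ :=
  (∫⁻ z, ENNReal.ofReal (|f z - g z| ^ p)) ^ (1 / p)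

/-- The affine map `x ↦ A x + b` on `ℝ^d` given by a matrix `A` and a vector `b`. -/
noncomputable def affMap (d : ℕ) (A : Matrix (Fin d) (Fin d) ℝ)
    (b : EuclideanSpace ℝ (Fin d)) : EuclideanSpace ℝ (Fin d) → EuclideanSpace ℝ (Fin d) :=
  fun x => Matrix.toEuclideanLin A x + b

section AddHaar

variable {E : Type*} [NormedAddCommGroup E] [NormedSpace ℝ E] [MeasurableSpace E] [BorelSpace E]
  [FiniteDimensional ℝ E] (μ : Measure E) [μ.IsAddHaarMeasure]

theorem ofReal_abs_det_mul_lintegral_comp_linearMap_add {f : E →ₗ[ℝ] E}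
    (hf : LinearMap.det f ≠ 0) (b : E) (F : E → ℝ≥0∞) :
    ENNReal.ofReal |LinearMap.det f| * ∫⁻ x, F (f x + b) ∂μ = ∫⁻ y, F y ∂μ := by
  have hdet : (0 : ℝ) < |LinearMap.det f| := abs_pos.mpr hf
  let e : E ≃ᵐ E := ((f.equivOfDetNeZero hf).toContinuousLinearEquiv.toHomeomorph.trans
    (Homeomorph.addRight b)).toMeasurableEquiv
  have hmap : μ.map e = ENNReal.ofReal |(LinearMap.det f)⁻¹| • μ := by
    rw [show (e : E → E) = (· + b) ∘ f from rfl,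
      ← Measure.map_map (measurable_add_const b) f.continuous_of_finiteDimensional.measurable,
      Measure.map_linearMap_addHaar_eq_smul_addHaar μ hf, Measure.map_smul,
      map_add_right_eq_self μ b]
  have hpush : ∫⁻ x, F (f x + b) ∂μ = ∫⁻ y, F y ∂μ.map e := (lintegral_map_equiv F e).symm
  rw [hpush, hmap, lintegral_smul_measure, smul_eq_mul, ← mul_assoc, abs_inv,
    ENNReal.ofReal_inv_of_pos hdet, ENNReal.mul_inv_cancel (ENNReal.ofReal_pos.mpr hdet).ne'
      ENNReal.ofReal_ne_top, one_mul]

end AddHaar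

theorem ofReal_abs_det_rpow_mul_DDp_comp_affMap {d : ℕ} (p : ℝ) {A : Matrix (Fin d) (Fin d) ℝ}
    (hA : A.det ≠ 0) (b : EuclideanSpace ℝ (Fin d)) (f g : EuclideanSpace ℝ (Fin d) → ℝ) :
    ENNReal.ofReal (|A.det| ^ (1 / p)) * DDp d p (f ∘ affMap d A b) (g ∘ affMap d A b) =
      DDp d p f g := by
  have hLdet : LinearMap.det (Matrix.toEuclideanLin A) = A.det := LinearMap.det_toLpLin 2 A
  have hdet : (0 : ℝ) < |A.det| := abs_pos.mpr hA
  -- `ofReal |A.det|` is neither `0` nor `⊤`, so `rpow` distributes even for a negative exponent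
  have hrpow_mul (y : ℝ≥0∞) : (ENNReal.ofReal |A.det| * y) ^ (1 / p) =
      ENNReal.ofReal |A.det| ^ (1 / p) * y ^ (1 / p) := by
    simp [ENNReal.mul_rpow_eq_ite, hA]
  rw [DDp, DDp, ← ENNReal.ofReal_rpow_of_pos hdet, ← hrpow_mul]
  congr 1
  have hchange := ofReal_abs_det_mul_lintegral_comp_linearMap_add volume (hLdet ▸ hA) b
    fun z => ENNReal.ofReal (|f z - g z| ^ p)
  rw [hLdet] at hchange
  exact hchange

theorem stmt_3_general (d : ℕ) (p : ℝ)
    (D : Measure (EuclideanSpace ℝ (Fin d)) → (EuclideanSpace ℝ (Fin d) → ℝ))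
    -- affine invariance of the depth
    (hAff : ∀ (A : Matrix (Fin d) (Fin d) ℝ), IsUnit A →
      ∀ b : EuclideanSpace ℝ (Fin d),
      ∀ ρ : Measure (EuclideanSpace ℝ (Fin d)), IsProbabilityMeasure ρ →
      ∀ x : EuclideanSpace ℝ (Fin d),
        D (Measure.map (affMap d A b) ρ) (affMap d A b x) = D ρ x)
    (A : Matrix (Fin d) (Fin d) ℝ) (hA : IsUnit A) (b : EuclideanSpace ℝ (Fin d))
    (μ ν : Measure (EuclideanSpace ℝ (Fin d)))
    (hμ : IsProbabilityMeasure μ) (hν : IsProbabilityMeasure ν) :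
    DDp d p (D (Measure.map (affMap d A b) μ)) (D (Measure.map (affMap d A b) ν)) =
      ENNReal.ofReal (|A.det| ^ (1 / p)) * DDp d p (D μ) (D ν) := by
  have hμ_pull : D μ = D (μ.map (affMap d A b)) ∘ affMap d A b :=
    funext fun x => (hAff A hA b μ hμ x).symm
  have hν_pull : D ν = D (ν.map (affMap d A b)) ∘ affMap d A b :=
    funext fun x => (hAff A hA b ν hν x).symm
  rw [hμ_pull, hν_pull, ofReal_abs_det_rpow_mul_DDp_comp_affMap p
    ((Matrix.isUnit_iff_isUnit_det A).mp hA).ne_zero]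

theorem stmt_3 (d : ℕ) (p : ℝ) (hp : 1 ≤ p)
    (D : Measure (EuclideanSpace ℝ (Fin d)) → (EuclideanSpace ℝ (Fin d) → ℝ))
    (hDmeas : ∀ ρ : Measure (EuclideanSpace ℝ (Fin d)),
      IsProbabilityMeasure ρ → Measurable (D ρ))
    (hDrange : ∀ ρ : Measure (EuclideanSpace ℝ (Fin d)),
      IsProbabilityMeasure ρ → ∀ x, D ρ x ∈ Set.Icc (0 : ℝ) 1)
    -- affine invariance of the depth
    (hAff : ∀ (A : Matrix (Fin d) (Fin d) ℝ), IsUnit A →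
      ∀ b : EuclideanSpace ℝ (Fin d),
      ∀ ρ : Measure (EuclideanSpace ℝ (Fin d)), IsProbabilityMeasure ρ →
      ∀ x : EuclideanSpace ℝ (Fin d),
        D (Measure.map (affMap d A b) ρ) (affMap d A b x) = D ρ x)
    (A : Matrix (Fin d) (Fin d) ℝ) (hA : IsUnit A) (b : EuclideanSpace ℝ (Fin d))
    (μ ν : Measure (EuclideanSpace ℝ (Fin d)))
    (hμ : IsProbabilityMeasure μ) (hν : IsProbabilityMeasure ν) :
    DDp d p (D (Measure.map (affMap d A b) μ)) (D (Measure.map (affMap d A b) ν)) =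
      ENNReal.ofReal (|A.det| ^ (1 / p)) * DDp d p (D μ) (D ν) :=
  stmt_3_general d p D hAff A hA b μ ν hμ hν
end

section
/- Let p ≥ 1, ε ≥ 0, and let D assign to every probability measure ρ on ℝ^d a depth function D_ρ : ℝ^d → [0,1] satisfying affine invariance: D_{g♯ρ}(g(x)) = D_ρ(x) for every map g(x) = Ax + b with A invertible, every x, and every ρ. Let μ, ν be probability measures on ℝ^d such that, with α* = min(sup_x D_μ(x), sup_x D_ν(x)) > ε, the regions D_μ^α = {x : D_μ(x) ≥ α} and D_ν^α are nonempty compact for every α ∈ [ε, α*]. If g(x) = Ax + b with A A^T = I_d (A orthogonal), then DR_{p,ε}(g♯μ, g♯ν) = DR_{p,ε}(μ, ν). -/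
open MeasureTheory

/-- `α* = min(sup_x f(x), sup_x g(x))`, the smallest of the two maximal depths. -/
noncomputable def alphaStar (d : ℕ) (f g : EuclideanSpace ℝ (Fin d) → ℝ) : ℝ :=
  min (⨆ x, f x) (⨆ x, g x)

/-- The depth-region discrepancy
`DR_{p,ε}(f,g) = ((1/(α*-ε)) ∫_ε^{α*} d_H({f ≥ α}, {g ≥ α})^p dα)^{1/p}`. -/
noncomputable def DRpe (d : ℕ) (p ε : ℝ)
    (f g : EuclideanSpace ℝ (Fin d) → ℝ) : ℝ :=
  ((alphaStar d f g - ε)⁻¹ * ∫ α in ε..(alphaStar d f g),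
    (Metric.hausdorffDist {x | α ≤ f x} {x | α ≤ g x}) ^ p) ^ (1 / p)

/-! An orthogonal affine map `g` is a surjective isometry of `ℝ^d`, and affine invariance says
`D_{g♯ρ} ∘ g = D_ρ`. Hence the depth regions of `g♯μ`, `g♯ν` are the images under `g` of those
of `μ`, `ν`, so the maximal depths and all Hausdorff distances between regions are unchanged. -/

section AffineIsometry

variable {d : ℕ} {A : Matrix (Fin d) (Fin d) ℝ}

noncomputable def orthogonalAffineIsometryEquiv (hA : A ∈ Matrix.orthogonalGroup (Fin d) ℝ)
    (b : EuclideanSpace ℝ (Fin d)) : EuclideanSpace ℝ (Fin d) ≃ᵢ EuclideanSpace ℝ (Fin d) :=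
  (Unitary.linearIsometryEquiv
    ⟨Matrix.toEuclideanCLM (𝕜 := ℝ) (n := Fin d) A, Unitary.map_mem _ hA⟩).toIsometryEquiv.trans
    (IsometryEquiv.addRight b)

theorem coe_orthogonalAffineIsometryEquiv (hA : A ∈ Matrix.orthogonalGroup (Fin d) ℝ)
    (b : EuclideanSpace ℝ (Fin d)) : ⇑(orthogonalAffineIsometryEquiv hA b) = affMap d A b :=
  rfl

end AffineIsometry

section Invariance

variable {d : ℕ} (f g : EuclideanSpace ℝ (Fin d) → ℝ)

theorem alphaStar_comp_of_surjective {e : EuclideanSpace ℝ (Fin d) → EuclideanSpace ℝ (Fin d)}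
    (he : Function.Surjective e) : alphaStar d (f ∘ e) (g ∘ e) = alphaStar d f g := by
  simp only [alphaStar, Function.comp_apply, he.iSup_comp]

theorem DRpe_comp_isometryEquiv (p ε : ℝ)
    (e : EuclideanSpace ℝ (Fin d) ≃ᵢ EuclideanSpace ℝ (Fin d)) :
    DRpe d p ε (f ∘ e) (g ∘ e) = DRpe d p ε f g := by
  have hlevel : ∀ (h : EuclideanSpace ℝ (Fin d) → ℝ) (α : ℝ),
      {x | α ≤ (h ∘ e) x} = e.symm '' {y | α ≤ h y} := fun h α => by
    rw [e.image_symm]; rfl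
  simp only [DRpe, alphaStar_comp_of_surjective f g e.surjective, hlevel,
    Metric.hausdorffDist_image e.symm.isometry]

end Invariance

theorem stmt_4_general (d : ℕ) (p ε : ℝ)
    (D : Measure (EuclideanSpace ℝ (Fin d)) → (EuclideanSpace ℝ (Fin d) → ℝ))
    -- affine invariance of the depth
    (hAff : ∀ (A : Matrix (Fin d) (Fin d) ℝ), IsUnit A →
      ∀ b : EuclideanSpace ℝ (Fin d),
      ∀ ρ : Measure (EuclideanSpace ℝ (Fin d)), IsProbabilityMeasure ρ →
      ∀ x : EuclideanSpace ℝ (Fin d),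
        D (Measure.map (affMap d A b) ρ) (affMap d A b x) = D ρ x)
    (μ ν : Measure (EuclideanSpace ℝ (Fin d)))
    (hμ : IsProbabilityMeasure μ) (hν : IsProbabilityMeasure ν)
    (A : Matrix (Fin d) (Fin d) ℝ) (hA : A * A.transpose = 1)
    (b : EuclideanSpace ℝ (Fin d)) :
    DRpe d p ε (D (Measure.map (affMap d A b) μ)) (D (Measure.map (affMap d A b) ν)) =
      DRpe d p ε (D μ) (D ν) := by
  have hAorth : A ∈ Matrix.orthogonalGroup (Fin d) ℝ := (Matrix.mem_orthogonalGroup_iff _ _).2 hA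
  have hAunit : IsUnit A := Unitary.isUnit_coe (U := ⟨A, hAorth⟩)
  have hdepth : ∀ ρ, IsProbabilityMeasure ρ →
      D ρ = D (Measure.map (affMap d A b) ρ) ∘ orthogonalAffineIsometryEquiv hAorth b :=
    fun ρ hρ => by
      rw [coe_orthogonalAffineIsometryEquiv]
      exact funext fun x => (hAff A hAunit b ρ hρ x).symm
  rw [hdepth μ hμ, hdepth ν hν, DRpe_comp_isometryEquiv]

theorem stmt_4 (d : ℕ) (p ε : ℝ) (hp : 1 ≤ p) (hε : 0 ≤ ε)
    (D : Measure (EuclideanSpace ℝ (Fin d)) → (EuclideanSpace ℝ (Fin d) → ℝ))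
    (hDrange : ∀ ρ : Measure (EuclideanSpace ℝ (Fin d)),
      IsProbabilityMeasure ρ → ∀ x, D ρ x ∈ Set.Icc (0 : ℝ) 1)
    -- affine invariance of the depth
    (hAff : ∀ (A : Matrix (Fin d) (Fin d) ℝ), IsUnit A →
      ∀ b : EuclideanSpace ℝ (Fin d),
      ∀ ρ : Measure (EuclideanSpace ℝ (Fin d)), IsProbabilityMeasure ρ →
      ∀ x : EuclideanSpace ℝ (Fin d),
        D (Measure.map (affMap d A b) ρ) (affMap d A b x) = D ρ x)
    (μ ν : Measure (EuclideanSpace ℝ (Fin d)))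
    (hμ : IsProbabilityMeasure μ) (hν : IsProbabilityMeasure ν)
    (hεα : ε < alphaStar d (D μ) (D ν))
    (hreg : ∀ α ∈ Set.Icc ε (alphaStar d (D μ) (D ν)),
      ({x | α ≤ D μ x}.Nonempty ∧ IsCompact {x | α ≤ D μ x}) ∧
      ({x | α ≤ D ν x}.Nonempty ∧ IsCompact {x | α ≤ D ν x}))
    (A : Matrix (Fin d) (Fin d) ℝ) (hA : A * A.transpose = 1)
    (b : EuclideanSpace ℝ (Fin d)) :
    DRpe d p ε (D (Measure.map (affMap d A b) μ)) (D (Measure.map (affMap d A b) ν)) =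
      DRpe d p ε (D μ) (D ν) :=
  stmt_4_general d p ε D hAff μ ν hμ hν A hA b
end

section
/- Let p ≥ 1, ε > 0, let μ be a probability measure on ℝ^d, X_1, X_2, … i.i.d. with law μ, and μ̂_n the empirical measures. Let D assign to every probability measure ρ on ℝ^d a depth function D_ρ : ℝ^d → [0,1] whose regions D_ρ^α are nonempty compact for α ∈ (0, α_max(ρ)]. Assume: (i) almost surely, sup_{x ∈ ℝ^d} |D_{μ̂_n}(x) − D_μ(x)| → 0; (ii) D is strictly monotone for μ, i.e., for every α ∈ (0, α_max(μ)), D_μ^α equals the closure of {x : D_μ(x) > α}, so that the map α ↦ D_μ^α is continuous on [ε, α_max(μ)] with respect to the Hausdorff distance; (iii) almost surely, sup_{α ∈ (0, α_max(μ)]} d_H(D_{μ̂_n}^α, D_μ^α) → 0. Then DR_{p,ε}(μ̂_n, μ) → 0 almost surely. -/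
open MeasureTheory Filter
open scoped ENNReal

/-- The empirical measure `μ̂_n = (1/n) ∑_{i<n} δ_{X_i(ω)}`. -/
noncomputable def empMeas {Ω : Type*} (d : ℕ)
    (X : ℕ → Ω → EuclideanSpace ℝ (Fin d)) (n : ℕ) (ω : Ω) :
    Measure (EuclideanSpace ℝ (Fin d)) :=
  (n : ℝ≥0∞)⁻¹ • ∑ i ∈ Finset.range n, Measure.dirac (X i ω)

/-
Write `δₙ = sup_x |D_{μ̂ₙ}(x) − D_μ(x)|`, which tends to `0` almost surely. Because
`D_μ − δₙ ≤ D_{μ̂ₙ} ≤ D_μ + δₙ`, the empirical region `D_{μ̂ₙ}^α` and `D_μ^α` are both squeezed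
between `D_μ^{α+δₙ}` and `D_μ^{α−δₙ}`, so their Hausdorff distance is at most that of these two
regions of `μ`. By compactness of `[ε, α_max(μ)]` the map `α ↦ D_μ^α` is uniformly continuous
there, so this is uniformly small, except for `α` within some small `θ` of the two ends. On those
two strips every region involved lies in the fixed compact set `D_μ^{ε/2}`, so the integrand is
bounded by `diam(D_μ^{ε/2})^p` there, and they contribute `O(θ)` to the average. When
`α_max(μ) ≤ ε`, the integrand vanishes and `DR_{p,ε} = 0`.
-/

open Metric Set Topology

lemma isProbabilityMeasure_empMeas {Ω : Type*} {d n : ℕ}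
    {X : ℕ → Ω → EuclideanSpace ℝ (Fin d)} {ω : Ω} (hn : n ≠ 0) :
    IsProbabilityMeasure (empMeas d X n ω) := by
  constructor
  have hn' : (n : ℝ≥0∞) ≠ 0 := Nat.cast_ne_zero.2 hn
  simp [empMeas, ENNReal.inv_mul_cancel hn' (ENNReal.natCast_ne_top n)]

lemma BddAbove.of_abs_sub {ι : Type*} {f g : ι → ℝ} (hg : BddAbove (range g))
    (hfg : BddAbove (range fun x => |f x - g x|)) : BddAbove (range f) := by
  obtain ⟨a, ha⟩ := hg
  obtain ⟨b, hb⟩ := hfg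
  refine ⟨a + b, ?_⟩
  rintro _ ⟨x, rfl⟩
  linarith [ha ⟨x, rfl⟩, hb ⟨x, rfl⟩, le_abs_self (f x - g x)]

lemma setOf_le_eq_empty_of_iSup_lt {ι : Type*} {f : ι → ℝ} (hf : BddAbove (range f)) {α : ℝ}
    (hα : ⨆ x, f x < α) : {x | α ≤ f x} = ∅ :=
  eq_empty_iff_forall_notMem.2 fun x hx => not_le.2 hα (le_trans hx (le_ciSup hf x))

section HausdorffDist

variable {X : Type*} [MetricSpace X]

lemma hausdorffDist_le_of_subset_of_subset {A B C E : Set X} (hC : C.Nonempty)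
    (hE : Bornology.IsBounded E) (hCA : C ⊆ A) (hAE : A ⊆ E) (hCB : C ⊆ B) (hBE : B ⊆ E) :
    hausdorffDist A B ≤ hausdorffDist C E := by
  have hfin : hausdorffEDist E C ≠ ⊤ :=
    hausdorffEDist_ne_top_of_nonempty_of_bounded (hC.mono (hCA.trans hAE)) hC hE
      (hE.subset (hCA.trans hAE))
  rw [hausdorffDist_comm (s := C)]
  refine hausdorffDist_le_of_infDist hausdorffDist_nonneg (fun x hx => ?_) fun x hx => ?_
  · exact (infDist_le_infDist_of_subset hCB hC).trans
      (infDist_le_hausdorffDist_of_mem (hAE hx) hfin)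
  · exact (infDist_le_infDist_of_subset hCA hC).trans
      (infDist_le_hausdorffDist_of_mem (hBE hx) hfin)

lemma hausdorffDist_le_diam_of_subset {A B K : Set X} (hK : Bornology.IsBounded K)
    (hA : A ⊆ K) (hB : B ⊆ K) : hausdorffDist A B ≤ diam K := by
  rcases A.eq_empty_or_nonempty with rfl | hA'
  · simpa only [hausdorffDist_empty'] using diam_nonneg
  rcases B.eq_empty_or_nonempty with rfl | hB'
  · simpa only [hausdorffDist_empty] using diam_nonneg
  exact (hausdorffDist_le_diam hA' (hK.subset hA) hB' (hK.subset hB)).trans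
    (diam_mono (union_subset hA hB) hK)

lemma hausdorffDist_setOf_le_le {f g : X → ℝ} {α δ : ℝ} (hfg : ∀ x, |f x - g x| ≤ δ)
    (hne : {x | α + δ ≤ g x}.Nonempty) (hbdd : Bornology.IsBounded {x | α - δ ≤ g x}) :
    hausdorffDist {x | α ≤ f x} {x | α ≤ g x} ≤
      hausdorffDist {x | α + δ ≤ g x} {x | α - δ ≤ g x} := by
  refine hausdorffDist_le_of_subset_of_subset hne hbdd ?_ ?_ ?_ ?_ <;> intro x hx <;>
    simp only [mem_ofPred_eq] at hx ⊢ <;> linarith [abs_le.1 (hfg x)]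

lemma exists_pos_forall_hausdorffDist_lt {A : ℝ → Set X} {a b : ℝ}
    (hA : ∀ β ∈ Icc a b, (A β).Nonempty ∧ IsCompact (A β))
    (hcont : ∀ α ∈ Icc a b, ∀ δ > (0 : ℝ), ∃ η > (0 : ℝ), ∀ β ∈ Icc a b, |β - α| < η →
      hausdorffDist (A β) (A α) < δ)
    {γ : ℝ} (hγ : 0 < γ) :
    ∃ η > (0 : ℝ), ∀ β ∈ Icc a b, ∀ β' ∈ Icc a b, |β - β'| < η →
      hausdorffDist (A β) (A β') < γ := by
  let F : Icc a b → TopologicalSpace.NonemptyCompacts X := fun β =>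
    ⟨⟨A β, (hA β β.2).2⟩, (hA β β.2).1⟩
  have hF : Continuous F := Metric.continuous_iff.2 fun α δ hδ => by
    obtain ⟨η, hη, h⟩ := hcont α α.2 δ hδ
    exact ⟨η, hη, fun β hβ => h β β.2 hβ⟩
  obtain ⟨η, hη, h⟩ :=
    Metric.uniformContinuous_iff.1 (CompactSpace.uniformContinuous_of_continuous hF) γ hγ
  exact ⟨η, hη, fun β hβ β' hβ' hββ' => h (a := ⟨β, hβ⟩) (b := ⟨β', hβ'⟩) hββ'⟩

end HausdorffDist

section IntervalIntegral

/-- No integrability of `h` is needed: a non-integrable `h` has integral `0`. -/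
lemma intervalIntegral_le_of_nonneg_of_le {h m : ℝ → ℝ} {a b : ℝ} (hab : a ≤ b)
    (hm : IntervalIntegrable m volume a b) (h0 : ∀ x ∈ Icc a b, 0 ≤ h x)
    (hhm : ∀ x ∈ Icc a b, h x ≤ m x) : ∫ x in a..b, h x ≤ ∫ x in a..b, m x := by
  by_cases hh : IntervalIntegrable h volume a b
  · exact intervalIntegral.integral_mono_on hab hh hm hhm
  · rw [intervalIntegral.integral_undef hh]
    exact intervalIntegral.integral_nonneg hab fun x hx => (h0 x hx).trans (hhm x hx)

lemma intervalIntegral_le_of_le_off_ends {h : ℝ → ℝ} {a b θ R c : ℝ} (hθ : 0 ≤ θ)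
    (hab : a + θ ≤ b - θ) (hc : 0 ≤ c) (h0 : ∀ x ∈ Icc a b, 0 ≤ h x)
    (hR : ∀ x ∈ Icc a b, h x ≤ R) (hmid : ∀ x ∈ Ioo (a + θ) (b - θ), h x ≤ c) :
    ∫ x in a..b, h x ≤ 2 * θ * R + c * (b - a) := by
  set I := Ioo (a + θ) (b - θ)
  set m : ℝ → ℝ := fun x => R + I.indicator (fun _ => c - R) x
  have hm : ∀ u v, IntervalIntegrable m volume u v := fun u v =>
    intervalIntegrable_const.add ((integrable_indicator_iff measurableSet_Ioo).2
      (integrableOn_const measure_Ioo_lt_top.ne)).intervalIntegrable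
  have hmI : ∀ x ∈ I, m x = c := fun x hx => by simp [m, indicator_of_mem hx]
  have hmR : ∀ x ∉ I, m x = R := fun x hx => by simp [m, indicator_of_notMem hx]
  have hhm : ∀ x ∈ Icc a b, h x ≤ m x := fun x hx => by
    by_cases hxI : x ∈ I
    · exact (hmid x hxI).trans (hmI x hxI).ge
    · exact (hR x hx).trans (hmR x hxI).ge
  have h1 : ∫ x in a..a + θ, m x ≤ ∫ _ in a..a + θ, R :=
    intervalIntegral.integral_mono_on_of_le_Ioo (by linarith) (hm _ _) intervalIntegrable_const
      fun x hx => (hmR x fun hxI => lt_asymm hx.2 hxI.1).le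
  have h2 : ∫ x in a + θ..b - θ, m x ≤ ∫ _ in a + θ..b - θ, c :=
    intervalIntegral.integral_mono_on_of_le_Ioo hab (hm _ _) intervalIntegrable_const
      fun x hx => (hmI x hx).le
  have h3 : ∫ x in b - θ..b, m x ≤ ∫ _ in b - θ..b, R :=
    intervalIntegral.integral_mono_on_of_le_Ioo (by linarith) (hm _ _) intervalIntegrable_const
      fun x hx => (hmR x fun hxI => lt_asymm hx.1 hxI.2).le
  simp only [intervalIntegral.integral_const, smul_eq_mul] at h1 h2 h3
  calc ∫ x in a..b, h x
      ≤ ∫ x in a..b, m x := intervalIntegral_le_of_nonneg_of_le (by linarith) (hm _ _) h0 hhm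
    _ = (∫ x in a..a + θ, m x) + (∫ x in a + θ..b - θ, m x) + ∫ x in b - θ..b, m x := by
      rw [intervalIntegral.integral_add_adjacent_intervals (hm _ _) (hm _ _),
        intervalIntegral.integral_add_adjacent_intervals (hm _ _) (hm _ _)]
    _ ≤ 2 * θ * R + c * (b - a) := by nlinarith [mul_nonneg hθ hc]

end IntervalIntegral

/-- The base of the `1 / p`-th power in `DRpe`. -/
noncomputable def meanHausdorffDistRpow (d : ℕ) (p ε : ℝ)
    (f g : EuclideanSpace ℝ (Fin d) → ℝ) : ℝ :=
  (alphaStar d f g - ε)⁻¹ * ∫ α in ε..alphaStar d f g,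
    hausdorffDist {x | α ≤ f x} {x | α ≤ g x} ^ p

section DepthRegions

variable {d : ℕ}

local notation "E" => EuclideanSpace ℝ (Fin d)

lemma iSup_sub_le_alphaStar {f g : E → ℝ} {δ : ℝ} (hf : BddAbove (range f))
    (hfg : ∀ x, |f x - g x| ≤ δ) : (⨆ x, g x) - δ ≤ alphaStar d f g := by
  refine le_min ?_ (sub_le_self _ ((abs_nonneg _).trans (hfg 0)))
  rw [sub_le_iff_le_add]
  exact ciSup_le fun x => by linarith [abs_le.1 (hfg x), le_ciSup hf x]

lemma meanHausdorffDistRpow_eq_zero_of_alphaStar_le {p ε : ℝ} (hp : 0 < p) {f g : E → ℝ}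
    (hf : BddAbove (range f)) (hg : BddAbove (range g)) (h : alphaStar d f g ≤ ε) :
    meanHausdorffDistRpow d p ε f g = 0 := by
  have hzero : ∀ α ∈ uIoc ε (alphaStar d f g),
      hausdorffDist {x | α ≤ f x} {x | α ≤ g x} ^ p = 0 := by
    intro α hα
    rw [uIoc_of_ge h] at hα
    rcases min_lt_iff.1 hα.1 with hfα | hgα
    · rw [setOf_le_eq_empty_of_iSup_lt hf hfα, hausdorffDist_empty', Real.zero_rpow hp.ne']
    · rw [setOf_le_eq_empty_of_iSup_lt hg hgα, hausdorffDist_empty, Real.zero_rpow hp.ne']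
  rw [meanHausdorffDistRpow, intervalIntegral.integral_congr_ae (g := fun _ => 0)
    (ae_of_all _ hzero), intervalIntegral.integral_zero, mul_zero]

lemma meanHausdorffDistRpow_le {p ε θ δ γ : ℝ} (hp : 0 < p) (hθ : 0 < θ) (hγ : 0 ≤ γ)
    {f g : E → ℝ} (hg : BddAbove (range g)) (hfg : ∀ x, |f x - g x| ≤ δ) (hδθ : δ ≤ θ)
    (hδε : δ ≤ ε / 2) (hθg : 4 * θ ≤ (⨆ x, g x) - ε)
    (hK : Bornology.IsBounded {x | ε / 2 ≤ g x})
    (hmid : ∀ α ∈ Ioo (ε + θ) ((⨆ x, g x) - θ),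
      hausdorffDist {x | α ≤ f x} {x | α ≤ g x} ≤ γ) :
    0 ≤ meanHausdorffDistRpow d p ε f g ∧ meanHausdorffDistRpow d p ε f g ≤
      4 * θ * diam {x | ε / 2 ≤ g x} ^ p / ((⨆ x, g x) - ε) + γ ^ p := by
  set M := ⨆ x, g x
  set b := alphaStar d f g
  set R := diam {x | ε / 2 ≤ g x} ^ p
  have hf : BddAbove (range f) := BddAbove.of_abs_sub hg ⟨δ, by rintro _ ⟨x, rfl⟩; exact hfg x⟩
  have hMb : M - δ ≤ b := iSup_sub_le_alphaStar hf hfg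
  have hbM : b ≤ M := min_le_right _ _
  have hbε : (M - ε) / 2 ≤ b - ε := by linarith
  have hcrude : ∀ α ∈ Icc ε b, hausdorffDist {x | α ≤ f x} {x | α ≤ g x} ^ p ≤ R := by
    intro α hα
    refine Real.rpow_le_rpow hausdorffDist_nonneg (hausdorffDist_le_diam_of_subset hK ?_ ?_) hp.le
      <;> intro x (hx : α ≤ _) <;> show ε / 2 ≤ g x <;> linarith [abs_le.1 (hfg x), hα.1]
  have hint := intervalIntegral_le_of_le_off_ends hθ.le (by linarith) (by positivity)
    (fun α _ => Real.rpow_nonneg hausdorffDist_nonneg p) hcrude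
    fun α hα => Real.rpow_le_rpow hausdorffDist_nonneg (hmid α ⟨hα.1, by linarith [hα.2]⟩) hp.le
  have hI0 : 0 ≤ ∫ α in ε..b, hausdorffDist {x | α ≤ f x} {x | α ≤ g x} ^ p :=
    intervalIntegral.integral_nonneg (by linarith) fun α _ =>
      Real.rpow_nonneg hausdorffDist_nonneg p
  have hbpos : 0 < b - ε := by linarith
  have hinv : 0 ≤ (b - ε)⁻¹ := inv_nonneg.2 hbpos.le
  refine ⟨mul_nonneg hinv hI0, ?_⟩
  have hR : 0 ≤ R := Real.rpow_nonneg diam_nonneg p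
  calc meanHausdorffDistRpow d p ε f g
      ≤ (b - ε)⁻¹ * (2 * θ * R + γ ^ p * (b - ε)) := mul_le_mul_of_nonneg_left hint hinv
    _ = 2 * θ * R / (b - ε) + γ ^ p := by field_simp
    _ ≤ 2 * θ * R / ((M - ε) / 2) + γ ^ p := by gcongr; linarith
    _ = 4 * θ * R / (M - ε) + γ ^ p := by rw [div_div_eq_mul_div]; ring

lemma eventually_meanHausdorffDistRpow_le {p ε c : ℝ} (hp : 0 < p) (hε : 0 < ε) (hc : 0 < c)
    {g : E → ℝ} {f : ℕ → E → ℝ} (hεg : ε < ⨆ x, g x) (hg : BddAbove (range g))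
    (hf : ∀ᶠ n in atTop, BddAbove (range fun x => |f n x - g x|))
    (hreg : ∀ α ∈ Ioc 0 (⨆ x, g x), {x | α ≤ g x}.Nonempty ∧ IsCompact {x | α ≤ g x})
    (hconv : Tendsto (fun n => ⨆ x, |f n x - g x|) atTop (𝓝 0))
    (hcont : ∀ α ∈ Icc ε (⨆ x, g x), ∀ δ > (0 : ℝ), ∃ η > (0 : ℝ),
      ∀ β ∈ Icc ε (⨆ x, g x), |β - α| < η → hausdorffDist {x | β ≤ g x} {x | α ≤ g x} < δ) :
    ∀ᶠ n in atTop, 0 ≤ meanHausdorffDistRpow d p ε (f n) g ∧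
      meanHausdorffDistRpow d p ε (f n) g ≤ c := by
  set M := ⨆ x, g x
  have hK : Bornology.IsBounded {x | ε / 2 ≤ g x} :=
    (hreg (ε / 2) ⟨half_pos hε, by linarith⟩).2.isBounded
  set R := diam {x | ε / 2 ≤ g x} ^ p
  have hR : 0 ≤ R := Real.rpow_nonneg diam_nonneg p
  set γ := (c / 2) ^ (1 / p)
  have hγ : 0 < γ := by positivity
  have hγp : γ ^ p = c / 2 := by
    rw [← Real.rpow_mul (by positivity), one_div_mul_cancel hp.ne', Real.rpow_one]
  obtain ⟨η, hη, hmod⟩ := exists_pos_forall_hausdorffDist_lt (A := fun β => {x | β ≤ g x})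
    (fun β hβ => hreg β ⟨hε.trans_le hβ.1, hβ.2⟩) hcont hγ
  set θ := min ((M - ε) / 4) (c * (M - ε) / (8 * (R + 1)))
  have hθ : 0 < θ := lt_min (by linarith) (by positivity)
  have hθM : 4 * θ ≤ M - ε := by linarith [min_le_left ((M - ε) / 4) (c * (M - ε) / (8 * (R + 1)))]
  have hθR : 4 * θ * R / (M - ε) ≤ c / 2 := by
    have h := (le_div_iff₀ (by positivity)).1
      (min_le_right ((M - ε) / 4) (c * (M - ε) / (8 * (R + 1))))
    rw [div_le_iff₀ (by linarith)]
    linarith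
  have hσ : 0 < min θ (min (η / 2) (ε / 2)) := lt_min hθ (lt_min (half_pos hη) (half_pos hε))
  filter_upwards [hf, hconv.eventually (gt_mem_nhds hσ)] with n hfn hδn
  set δ := ⨆ x, |f n x - g x|
  have hfg : ∀ x, |f n x - g x| ≤ δ := fun x => le_ciSup hfn x
  have hδ : 0 ≤ δ := (abs_nonneg _).trans (hfg 0)
  obtain ⟨hδθ, hδη, hδε⟩ : δ < θ ∧ δ < η / 2 ∧ δ < ε / 2 := by simpa only [lt_min_iff] using hδn
  have hmid : ∀ α ∈ Ioo (ε + θ) (M - θ),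
      hausdorffDist {x | α ≤ f n x} {x | α ≤ g x} ≤ γ := by
    intro α hα
    have hup : α + δ ∈ Icc ε M := ⟨by linarith [hα.1], by linarith [hα.2]⟩
    have hlo : α - δ ∈ Icc ε M := ⟨by linarith [hα.1], by linarith [hα.2]⟩
    refine (hausdorffDist_setOf_le_le hfg (hreg _ ⟨hε.trans_le hup.1, hup.2⟩).1
      (hreg _ ⟨hε.trans_le hlo.1, hlo.2⟩).2.isBounded).trans (hmod _ hup _ hlo ?_).le
    rw [show α + δ - (α - δ) = 2 * δ by ring, abs_of_nonneg (by linarith)]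
    linarith
  obtain ⟨h0, hle⟩ :=
    meanHausdorffDistRpow_le hp hθ hγ.le hg hfg hδθ.le hδε.le hθM hK hmid
  exact ⟨h0, by linarith⟩

theorem tendsto_meanHausdorffDistRpow {p ε : ℝ} (hp : 0 < p) (hε : 0 < ε) {g : E → ℝ}
    {f : ℕ → E → ℝ} (hg : BddAbove (range g))
    (hf : ∀ᶠ n in atTop, BddAbove (range fun x => |f n x - g x|))
    (hreg : ∀ α ∈ Ioc 0 (⨆ x, g x), {x | α ≤ g x}.Nonempty ∧ IsCompact {x | α ≤ g x})
    (hconv : Tendsto (fun n => ⨆ x, |f n x - g x|) atTop (𝓝 0))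
    (hcont : ∀ α ∈ Icc ε (⨆ x, g x), ∀ δ > (0 : ℝ), ∃ η > (0 : ℝ),
      ∀ β ∈ Icc ε (⨆ x, g x), |β - α| < η → hausdorffDist {x | β ≤ g x} {x | α ≤ g x} < δ) :
    Tendsto (fun n => meanHausdorffDistRpow d p ε (f n) g) atTop (𝓝 0) := by
  rcases le_or_gt (⨆ x, g x) ε with hgε | hεg
  · refine tendsto_const_nhds.congr' ?_
    filter_upwards [hf] with n hfn
    exact (meanHausdorffDistRpow_eq_zero_of_alphaStar_le hp (BddAbove.of_abs_sub hg hfn) hg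
      ((min_le_right _ _).trans hgε)).symm
  have h c (hc : 0 < c) :=
    eventually_meanHausdorffDistRpow_le hp hε hc hεg hg hf hreg hconv hcont
  exact tendsto_order.2 ⟨fun a ha => (h 1 one_pos).mono fun n hn => ha.trans_le hn.1,
    fun a ha => (h (a / 2) (half_pos ha)).mono fun n hn => hn.2.trans_lt (half_lt_self ha)⟩

theorem tendsto_DRpe {p ε : ℝ} (hp : 0 < p) (hε : 0 < ε) {g : E → ℝ}
    {f : ℕ → E → ℝ} (hg : BddAbove (range g))
    (hf : ∀ᶠ n in atTop, BddAbove (range fun x => |f n x - g x|))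
    (hreg : ∀ α ∈ Ioc 0 (⨆ x, g x), {x | α ≤ g x}.Nonempty ∧ IsCompact {x | α ≤ g x})
    (hconv : Tendsto (fun n => ⨆ x, |f n x - g x|) atTop (𝓝 0))
    (hcont : ∀ α ∈ Icc ε (⨆ x, g x), ∀ δ > (0 : ℝ), ∃ η > (0 : ℝ),
      ∀ β ∈ Icc ε (⨆ x, g x), |β - α| < η → hausdorffDist {x | β ≤ g x} {x | α ≤ g x} < δ) :
    Tendsto (fun n => DRpe d p ε (f n) g) atTop (𝓝 0) := by
  have h := (Real.continuousAt_rpow_const 0 (1 / p) (Or.inr (by positivity))).tendsto.comp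
    (tendsto_meanHausdorffDistRpow hp hε hg hf hreg hconv hcont)
  rwa [Real.zero_rpow (by positivity)] at h

end DepthRegions

theorem stmt_6_general (d : ℕ) (p ε : ℝ) (hp : 1 ≤ p) (hε : 0 < ε)
    {Ω : Type*} [MeasurableSpace Ω] (P : Measure Ω)
    (μ : Measure (EuclideanSpace ℝ (Fin d))) [IsProbabilityMeasure μ]
    (X : ℕ → Ω → EuclideanSpace ℝ (Fin d))
    (D : Measure (EuclideanSpace ℝ (Fin d)) → (EuclideanSpace ℝ (Fin d) → ℝ))
    (hDrange : ∀ ρ : Measure (EuclideanSpace ℝ (Fin d)),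
      IsProbabilityMeasure ρ → ∀ x, D ρ x ∈ Set.Icc (0 : ℝ) 1)
    -- regions are nonempty compact for `α ∈ (0, α_max(ρ)]`
    (hreg : ∀ ρ : Measure (EuclideanSpace ℝ (Fin d)), IsProbabilityMeasure ρ →
      ∀ α ∈ Set.Ioc (0 : ℝ) (⨆ x, D ρ x),
        {x | α ≤ D ρ x}.Nonempty ∧ IsCompact {x | α ≤ D ρ x})
    -- (i) almost sure uniform convergence of the empirical depth
    (hunif : ∀ᵐ ω ∂P,
      Tendsto (fun n => ⨆ x, |D (empMeas d X n ω) x - D μ x|) atTop (nhds 0))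
    (hcont : ∀ α ∈ Set.Icc ε (⨆ x, D μ x), ∀ δ > (0 : ℝ), ∃ η > (0 : ℝ),
      ∀ β ∈ Set.Icc ε (⨆ x, D μ x), |β - α| < η →
        Metric.hausdorffDist {x | β ≤ D μ x} {x | α ≤ D μ x} < δ) :
    ∀ᵐ ω ∂P,
      Tendsto (fun n => DRpe d p ε (D (empMeas d X n ω)) (D μ)) atTop (nhds 0) := by
  filter_upwards [hunif] with ω hω
  have hμ := hDrange μ inferInstance
  have hemp : ∀ᶠ n in atTop, IsProbabilityMeasure (empMeas d X n ω) :=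
    (eventually_ne_atTop 0).mono fun n hn => isProbabilityMeasure_empMeas hn
  refine tendsto_DRpe (by linarith) hε ⟨1, ?_⟩ (hemp.mono fun n hn => ⟨1, ?_⟩)
    (hreg μ inferInstance) hω hcont
  · rintro _ ⟨x, rfl⟩
    exact (hμ x).2
  · rintro _ ⟨x, rfl⟩
    have hn := hDrange _ hn x
    exact abs_sub_le_iff.2 ⟨by linarith [hn.2, (hμ x).1], by linarith [hn.1, (hμ x).2]⟩

theorem stmt_6 (d : ℕ) (p ε : ℝ) (hp : 1 ≤ p) (hε : 0 < ε)
    {Ω : Type*} [MeasurableSpace Ω] (P : Measure Ω) [IsProbabilityMeasure P]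
    (μ : Measure (EuclideanSpace ℝ (Fin d))) [IsProbabilityMeasure μ]
    (X : ℕ → Ω → EuclideanSpace ℝ (Fin d))
    (hXmeas : ∀ i, Measurable (X i))
    (hXlaw : ∀ i, Measure.map (X i) P = μ)
    (hXindep : ProbabilityTheory.iIndepFun X P)
    (D : Measure (EuclideanSpace ℝ (Fin d)) → (EuclideanSpace ℝ (Fin d) → ℝ))
    (hDrange : ∀ ρ : Measure (EuclideanSpace ℝ (Fin d)),
      IsProbabilityMeasure ρ → ∀ x, D ρ x ∈ Set.Icc (0 : ℝ) 1)
    -- regions are nonempty compact for `α ∈ (0, α_max(ρ)]`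
    (hreg : ∀ ρ : Measure (EuclideanSpace ℝ (Fin d)), IsProbabilityMeasure ρ →
      ∀ α ∈ Set.Ioc (0 : ℝ) (⨆ x, D ρ x),
        {x | α ≤ D ρ x}.Nonempty ∧ IsCompact {x | α ≤ D ρ x})
    -- (i) almost sure uniform convergence of the empirical depth
    (hunif : ∀ᵐ ω ∂P,
      Tendsto (fun n => ⨆ x, |D (empMeas d X n ω) x - D μ x|) atTop (nhds 0))
    -- (ii) strict monotonicity of the depth for μ ...
    (hmono : ∀ α ∈ Set.Ioo (0 : ℝ) (⨆ x, D μ x),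
      {x | α ≤ D μ x} = closure {x | α < D μ x})
    (hcont : ∀ α ∈ Set.Icc ε (⨆ x, D μ x), ∀ δ > (0 : ℝ), ∃ η > (0 : ℝ),
      ∀ β ∈ Set.Icc ε (⨆ x, D μ x), |β - α| < η →
        Metric.hausdorffDist {x | β ≤ D μ x} {x | α ≤ D μ x} < δ)
    -- (iii) almost sure uniform convergence of the depth regions
    (hregconv : ∀ᵐ ω ∂P,
      Tendsto (fun n => ⨆ α ∈ Set.Ioc (0 : ℝ) (⨆ x, D μ x),
        Metric.hausdorffDist {x | α ≤ D (empMeas d X n ω) x} {x | α ≤ D μ x})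
        atTop (nhds 0)) :
    ∀ᵐ ω ∂P,
      Tendsto (fun n => DRpe d p ε (D (empMeas d X n ω)) (D μ)) atTop (nhds 0) :=
  stmt_6_general d p ε hp hε P μ X D hDrange hreg hunif hcont
end

section
/- Let p ≥ 1 and let μ, ν be probability measures on ℝ with continuous cumulative distribution functions F, G and generalized inverse (quantile) functions F^{-1}(q) = inf{t : F(t) ≥ q}, G^{-1}(q) = inf{t : G(t) ≥ q}. Then (∫_0^1 |F^{-1}(q) − G^{-1}(q)|^p dq)^{1/p} ≤ (2 ∫_0^{1/2} max(|F^{-1}(1−α) − G^{-1}(1−α)|, |F^{-1}(α) − G^{-1}(α)|)^p dα)^{1/p}. In other words, the p-Wasserstein distance W_p(μ,ν), given in dimension one by the L^p distance of quantile functions, is bounded above by the depth-region discrepancy DR_{p,0}(μ,ν) computed with the halfspace depth, whose Hausdorff distances between the interval depth regions equal the maxima of the endpoint differences. -/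
/-!
Split `(0, 1)` at `1/2` and reflect the upper half by `q ↦ 1 - q`: the `p`-th power of the
quantile distance on `(0, 1)` becomes the sum of its values at `α` and `1 - α` over `(0, 1/2)`,
and each summand is at most the `p`-th power of the larger endpoint difference.
-/

open MeasureTheory Set
open scoped ENNReal

theorem lintegral_Ioo_eq_add_lintegral_reflect {a b : ℝ} (hab : a < b) (f : ℝ → ℝ≥0∞) :
    ∫⁻ x in Ioo a b, f x =
      (∫⁻ x in Ioo a ((a + b) / 2), f x) + ∫⁻ x in Ioo a ((a + b) / 2), f (a + b - x) := by
  have hreflect : MeasurePreserving (fun x : ℝ => a + b - x) volume volume :=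
    volume.measurePreserving_sub_left (a + b)
  have hpre : (fun x : ℝ => a + b - x) ⁻¹' Ioo ((a + b) / 2) b = Ioo a ((a + b) / 2) := by
    ext x
    simp only [mem_preimage, mem_Ioo]
    constructor <;> rintro ⟨_, _⟩ <;> constructor <;> linarith
  rw [← Ioc_union_Ioo_eq_Ioo (b := (a + b) / 2) (by linarith) (by linarith),
    lintegral_union measurableSet_Ioo (Ioc_disjoint_Ioi_same.mono_right Ioo_subset_Ioi_self),
    Measure.restrict_congr_set Ioo_ae_eq_Ioc.symm, ← hpre,
    hreflect.setLIntegral_comp_preimage_emb (MeasurableEquiv.subLeft (a + b)).measurableEmbedding]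

theorem stmt_13_general (p : ℝ) (hp : 1 ≤ p)
    (Finv Ginv : ℝ → ℝ) :
    (∫⁻ q in Set.Ioo (0 : ℝ) 1, ENNReal.ofReal (|Finv q - Ginv q| ^ p)) ^ (1 / p) ≤
      (2 * ∫⁻ α in Set.Ioo (0 : ℝ) (1 / 2), ENNReal.ofReal
        ((max |Finv (1 - α) - Ginv (1 - α)| |Finv α - Ginv α|) ^ p)) ^ (1 / p) := by
  have hp0 : 0 ≤ p := zero_le_one.trans hp
  have hfold := lintegral_Ioo_eq_add_lintegral_reflect (zero_lt_one' ℝ)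
    fun q => ENNReal.ofReal (|Finv q - Ginv q| ^ p)
  norm_num at hfold
  gcongr
  rw [hfold, two_mul]
  gcongr with α
  exacts [le_max_right _ _, le_max_left _ _]

theorem stmt_13 (p : ℝ) (hp : 1 ≤ p)
    (μ ν : Measure ℝ) [IsProbabilityMeasure μ] [IsProbabilityMeasure ν]
    (F G : ℝ → ℝ)
    (hF : ∀ t, F t = (μ (Set.Iic t)).toReal)
    (hG : ∀ t, G t = (ν (Set.Iic t)).toReal)
    (hFcont : Continuous F) (hGcont : Continuous G)
    (Finv Ginv : ℝ → ℝ)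
    (hFinv : ∀ q, Finv q = sInf {t : ℝ | q ≤ F t})
    (hGinv : ∀ q, Ginv q = sInf {t : ℝ | q ≤ G t}) :
    (∫⁻ q in Set.Ioo (0 : ℝ) 1, ENNReal.ofReal (|Finv q - Ginv q| ^ p)) ^ (1 / p) ≤
      (2 * ∫⁻ α in Set.Ioo (0 : ℝ) (1 / 2), ENNReal.ofReal
        ((max |Finv (1 - α) - Ginv (1 - α)| |Finv α - Ginv α|) ^ p)) ^ (1 / p) :=
  stmt_13_general p hp Finv Ginv
end

section
/- Let μ = N(m, Σ) be the Gaussian measure on ℝ^d with mean m and positive definite covariance Σ, and let α ∈ (0, 1/2]. Then for every u ∈ S^{d−1}, the support function of the halfspace depth region satisfies h_{D_μ^α}(u) = sup{⟨u,x⟩ : x ∈ D_μ^α} = ⟨u,m⟩ + Φ^{-1}(1−α) · √(uᵀΣu), where Φ is the cdf of the standard univariate Gaussian distribution. -/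
open MeasureTheory ProbabilityTheory
open scoped RealInnerProductSpace

/-- The halfspace (Tukey) depth of `x` w.r.t. a measure `ρ` on `ℝ^d`. -/
noncomputable def halfspaceDepth (d : ℕ) (ρ : Measure (EuclideanSpace ℝ (Fin d)))
    (x : EuclideanSpace ℝ (Fin d)) : ℝ :=
  ⨅ u : Metric.sphere (0 : EuclideanSpace ℝ (Fin d)) 1,
    (ρ {y | ⟪(u : EuclideanSpace ℝ (Fin d)), y⟫ ≤ ⟪(u : EuclideanSpace ℝ (Fin d)), x⟫}).toReal

/-- The `α`-depth region of the halfspace depth. -/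
def hdRegion (d : ℕ) (ρ : Measure (EuclideanSpace ℝ (Fin d))) (α : ℝ) :
    Set (EuclideanSpace ℝ (Fin d)) :=
  {x | α ≤ halfspaceDepth d ρ x}

/-- The quadratic form `u ↦ uᵀ Σ u` of a matrix `Σ` on `ℝ^d`. -/
def quadForm (d : ℕ) (S : Matrix (Fin d) (Fin d) ℝ) (u : EuclideanSpace ℝ (Fin d)) : ℝ :=
  dotProduct (fun i => u i) (S.mulVec (fun i => u i))

/-- `Φ`, the cdf of the standard univariate Gaussian distribution. -/
noncomputable def stdGaussianCDF (t : ℝ) : ℝ :=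
  ((gaussianReal 0 1) (Set.Iic t)).toReal

/-- The generalized inverse `Φ⁻¹` of the standard Gaussian cdf. -/
noncomputable def stdGaussianQuantile (q : ℝ) : ℝ :=
  sInf {t : ℝ | q ≤ stdGaussianCDF t}

/-
Each halfspace probability is a one-dimensional Gaussian probability:
`μ {y | ⟪v, y⟫ ≤ ⟪v, x⟫} = Φ ((⟪v, x⟫ - ⟪v, m⟫) / √(vᵀΣv))`. With `c = Φ⁻¹(1 - α)`, applying this to
the direction `-u` shows that every `x` of depth at least `α` satisfies `⟪u, x⟫ ≤ ⟪u, m⟫ + c √(uᵀΣu)`.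
The bound is attained at `m + c Σu / √(uᵀΣu)`: since `c ≥ 0` for `α ≤ 1/2`, the Cauchy–Schwarz
inequality `|vᵀΣu| ≤ √(vᵀΣv) √(uᵀΣu)` shows that this point has depth at least `Φ(-c) = α`.
-/

open Set Matrix

namespace ProbabilityTheory

lemma continuous_cdf (μ : Measure ℝ) [IsProbabilityMeasure μ] [NullSingletonClass μ] :
    Continuous (cdf μ) := by
  refine continuous_iff_continuousAt.2 fun x => ?_
  have hleft : Function.leftLim (cdf μ) x = cdf μ x := by
    have h := (cdf μ).measure_singleton x
    rw [measure_cdf, measure_singleton, eq_comm, ENNReal.ofReal_eq_zero] at h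
    exact le_antisymm ((cdf μ).mono.leftLim_le le_rfl) (by linarith)
  rw [(cdf μ).mono.continuousAt_iff_leftLim_eq_rightLim, hleft, (cdf μ).rightLim_eq]

end ProbabilityTheory

lemma stdGaussianCDF_eq_cdf : stdGaussianCDF = cdf (gaussianReal 0 1) :=
  funext fun t => (cdf_eq_real _ t).symm

lemma continuous_stdGaussianCDF : Continuous stdGaussianCDF := by
  have := nullSingletonClass_gaussianReal (μ := 0) one_ne_zero
  rw [stdGaussianCDF_eq_cdf]
  exact continuous_cdf _

lemma strictMono_stdGaussianCDF : StrictMono stdGaussianCDF := by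
  intro s t hst
  have hpos : 0 < gaussianReal 0 1 (Ioc s t) := by
    refine pos_iff_ne_zero.2 fun h => ?_
    have := gaussianReal_absolutelyContinuous' 0 one_ne_zero h
    simp [Real.volume_Ioc] at this
    linarith
  rw [← measure_cdf (gaussianReal 0 1), StieltjesFunction.measure_Ioc,
    ENNReal.ofReal_pos, ← stdGaussianCDF_eq_cdf] at hpos
  linarith

lemma stdGaussianCDF_neg (t : ℝ) : stdGaussianCDF (-t) = 1 - stdGaussianCDF t := by
  have := nullSingletonClass_gaussianReal (μ := 0) one_ne_zero
  have hIci : (gaussianReal 0 1).real (Ici t) = (gaussianReal 0 1).real (Ioi t) :=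
    measureReal_congr Ioi_ae_eq_Ici.symm
  calc stdGaussianCDF (-t)
      = ((gaussianReal 0 1).map (fun x => -x)).real (Iic (-t)) := by
        rw [gaussianReal_map_neg, neg_zero]; rfl
    _ = (gaussianReal 0 1).real (Ici t) := by
        rw [map_measureReal_apply (by fun_prop) measurableSet_Iic]
        congr 1
        ext x
        simp
    _ = 1 - stdGaussianCDF t := by
        rw [hIci, ← compl_Iic, probReal_compl_eq_one_sub measurableSet_Iic]; rfl

lemma stdGaussianCDF_stdGaussianQuantile {q : ℝ} (hq0 : 0 < q) (hq1 : q < 1) :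
    stdGaussianCDF (stdGaussianQuantile q) = q := by
  obtain ⟨a, ha⟩ : ∃ a, stdGaussianCDF a < q := by
    rw [stdGaussianCDF_eq_cdf]; exact ((tendsto_cdf_atBot _).eventually_lt_const hq0).exists
  obtain ⟨b, hb⟩ : ∃ b, q < stdGaussianCDF b := by
    rw [stdGaussianCDF_eq_cdf]; exact ((tendsto_cdf_atTop _).eventually_const_lt hq1).exists
  obtain ⟨t₀, rfl⟩ : q ∈ range stdGaussianCDF :=
    intermediate_value_univ a b continuous_stdGaussianCDF ⟨ha.le, hb.le⟩
  have hset : {t | stdGaussianCDF t₀ ≤ stdGaussianCDF t} = Ici t₀ :=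
    ext fun t => strictMono_stdGaussianCDF.le_iff_le
  rw [stdGaussianQuantile, hset, csInf_Ici]

lemma stdGaussianQuantile_nonneg {q : ℝ} (hq : 1 / 2 ≤ q) (hq1 : q < 1) :
    0 ≤ stdGaussianQuantile q := by
  have hΦ0 : stdGaussianCDF 0 = 1 / 2 := by
    have := stdGaussianCDF_neg 0
    rw [neg_zero] at this
    linarith
  rwa [← strictMono_stdGaussianCDF.le_iff_le,
    stdGaussianCDF_stdGaussianQuantile (by linarith) hq1, hΦ0]

lemma toReal_gaussianReal_Iic (a : ℝ) {v : NNReal} (hv : v ≠ 0) (t : ℝ) :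
    (gaussianReal a v (Iic t)).toReal = stdGaussianCDF ((t - a) / Real.sqrt v) := by
  have hσ : 0 < Real.sqrt v := Real.sqrt_pos.2 (by positivity)
  have hstd : (gaussianReal a v).map (fun x => (x - a) / Real.sqrt v) = gaussianReal 0 1 := by
    rw [show (fun x => (x - a) / Real.sqrt v) = (· / Real.sqrt v) ∘ (· - a) from rfl,
      ← Measure.map_map (by fun_prop) (by fun_prop), gaussianReal_map_sub_const,
      gaussianReal_map_div_const]
    congr 1
    · simp
    · ext; simp [hv]
  have hpre : (fun x => (x - a) / Real.sqrt v) ⁻¹' Iic ((t - a) / Real.sqrt v) = Iic t := by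
    ext x; simp [div_le_div_iff_of_pos_right hσ]
  rw [stdGaussianCDF, ← hstd, Measure.map_apply (by fun_prop) measurableSet_Iic, hpre]

lemma Matrix.PosSemidef.abs_dotProduct_mulVec_le {n : Type*} [Fintype n]
    {S : Matrix n n ℝ} (hS : S.PosSemidef) (x y : n → ℝ) :
    |x ⬝ᵥ S *ᵥ y| ≤ Real.sqrt (x ⬝ᵥ S *ᵥ x) * Real.sqrt (y ⬝ᵥ S *ᵥ y) := by
  classical
  have hsymm : y ⬝ᵥ S *ᵥ x = x ⬝ᵥ S *ᵥ y := by
    rw [dotProduct_mulVec, ← mulVec_transpose, dotProduct_comm,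
      (isHermitian_iff_isSymm.1 hS.isHermitian).eq]
  have hcs := LinearMap.BilinForm.apply_mul_apply_le_of_forall_zero_le
    (toLinearMap₂' ℝ S) (fun z => by
      simpa [toLinearMap₂'_apply'] using hS.dotProduct_mulVec_nonneg z) x y
  simp only [toLinearMap₂'_apply', hsymm] at hcs
  rw [← Real.sqrt_mul (by simpa using hS.dotProduct_mulVec_nonneg x)]
  exact Real.abs_le_sqrt (by rw [sq]; exact hcs)

section QuadForm

variable {d : ℕ} {S : Matrix (Fin d) (Fin d) ℝ}

lemma quadForm_pos (hS : S.PosDef) {v : EuclideanSpace ℝ (Fin d)} (hv : v ≠ 0) :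
    0 < quadForm d S v := by
  simpa [quadForm] using hS.dotProduct_mulVec_pos (x := v.ofLp) (by simpa using hv)

lemma quadForm_neg (v : EuclideanSpace ℝ (Fin d)) : quadForm d S (-v) = quadForm d S v := by
  show (-v.ofLp) ⬝ᵥ S *ᵥ (-v.ofLp) = v.ofLp ⬝ᵥ S *ᵥ v.ofLp
  rw [mulVec_neg, dotProduct_neg, neg_dotProduct, neg_neg]

lemma inner_toLp_mulVec (v w : EuclideanSpace ℝ (Fin d)) :
    ⟪v, WithLp.toLp 2 (S *ᵥ w.ofLp)⟫ = v.ofLp ⬝ᵥ S *ᵥ w.ofLp := by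
  simp [EuclideanSpace.inner_eq_star_dotProduct, dotProduct_comm]

end QuadForm

section HalfspaceDepth

variable {d : ℕ} {ρ : Measure (EuclideanSpace ℝ (Fin d))} {x : EuclideanSpace ℝ (Fin d)}

lemma halfspaceDepth_le {u : EuclideanSpace ℝ (Fin d)} (hu : u ∈ Metric.sphere 0 1) :
    halfspaceDepth d ρ x ≤ (ρ {y | ⟪u, y⟫ ≤ ⟪u, x⟫}).toReal :=
  ciInf_le ⟨0, by rintro _ ⟨v, rfl⟩; exact ENNReal.toReal_nonneg⟩ (⟨u, hu⟩ : Metric.sphere _ _)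

lemma le_halfspaceDepth [Nonempty (Metric.sphere (0 : EuclideanSpace ℝ (Fin d)) 1)] {α : ℝ}
    (h : ∀ u ∈ Metric.sphere (0 : EuclideanSpace ℝ (Fin d)) 1,
      α ≤ (ρ {y | ⟪u, y⟫ ≤ ⟪u, x⟫}).toReal) :
    α ≤ halfspaceDepth d ρ x :=
  le_ciInf fun u => h u u.2

end HalfspaceDepth

section Gaussian

variable {d : ℕ} {m : EuclideanSpace ℝ (Fin d)} {S : Matrix (Fin d) (Fin d) ℝ}
  {μ : Measure (EuclideanSpace ℝ (Fin d))}

lemma toReal_measure_halfspace {v : EuclideanSpace ℝ (Fin d)}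
    (hμ : μ.map (fun x => ⟪v, x⟫) = gaussianReal ⟪v, m⟫ (quadForm d S v).toNNReal)
    (hv : 0 < quadForm d S v) (x : EuclideanSpace ℝ (Fin d)) :
    (μ {y | ⟪v, y⟫ ≤ ⟪v, x⟫}).toReal =
      stdGaussianCDF ((⟪v, x⟫ - ⟪v, m⟫) / Real.sqrt (quadForm d S v)) := by
  have hmeas : Measurable fun y : EuclideanSpace ℝ (Fin d) => ⟪v, y⟫ := by fun_prop
  rw [show {y | ⟪v, y⟫ ≤ ⟪v, x⟫} = (fun y => ⟪v, y⟫) ⁻¹' Iic ⟪v, x⟫ from rfl,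
    ← Measure.map_apply hmeas measurableSet_Iic, hμ,
    toReal_gaussianReal_Iic _ (by simpa using hv), Real.coe_toNNReal _ hv.le]

lemma inner_le_of_mem_hdRegion (hS : S.PosDef)
    (hμ : ∀ v, μ.map (fun x => ⟪v, x⟫) = gaussianReal ⟪v, m⟫ (quadForm d S v).toNNReal)
    {α : ℝ} (hα0 : 0 < α) (hα1 : α < 1) {u : EuclideanSpace ℝ (Fin d)}
    (hu : u ∈ Metric.sphere 0 1) {x : EuclideanSpace ℝ (Fin d)} (hx : x ∈ hdRegion d μ α) :
    ⟪u, x⟫ ≤ ⟪u, m⟫ + stdGaussianQuantile (1 - α) * Real.sqrt (quadForm d S u) := by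
  have hq := quadForm_pos hS (ne_zero_of_mem_unit_sphere ⟨u, hu⟩)
  have hσ : 0 < Real.sqrt (quadForm d S u) := Real.sqrt_pos.2 hq
  have hneg : -u ∈ Metric.sphere (0 : EuclideanSpace ℝ (Fin d)) 1 := by simpa using hu
  have h := hx.out.trans (halfspaceDepth_le hneg)
  rw [toReal_measure_halfspace (hμ _) (by rwa [quadForm_neg]) x, quadForm_neg, inner_neg_left,
    inner_neg_left, show ∀ a b : ℝ, -a - -b = -(a - b) by intros; ring, neg_div,
    stdGaussianCDF_neg] at h
  have hz : (⟪u, x⟫ - ⟪u, m⟫) / Real.sqrt (quadForm d S u) ≤ stdGaussianQuantile (1 - α) := by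
    rw [← strictMono_stdGaussianCDF.le_iff_le,
      stdGaussianCDF_stdGaussianQuantile (by linarith) (by linarith)]
    linarith
  rw [div_le_iff₀ hσ] at hz
  linarith

/-- The point `m + c Σu / √(uᵀΣu)`, where the hyperplane `⟪u, ·⟫ = ⟪u, m⟫ + c √(uᵀΣu)` touches
the ellipsoid `{x | (x - m)ᵀ Σ⁻¹ (x - m) ≤ c²}`. -/
noncomputable def ellipsoidSupportPoint (m : EuclideanSpace ℝ (Fin d))
    (S : Matrix (Fin d) (Fin d) ℝ) (u : EuclideanSpace ℝ (Fin d)) (c : ℝ) : EuclideanSpace ℝ (Fin d) :=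
  m + (c / Real.sqrt (quadForm d S u)) • WithLp.toLp 2 (S *ᵥ u.ofLp)

lemma inner_ellipsoidSupportPoint (u : EuclideanSpace ℝ (Fin d)) (c : ℝ) :
    ⟪u, ellipsoidSupportPoint m S u c⟫ = ⟪u, m⟫ + c * Real.sqrt (quadForm d S u) := by
  rw [ellipsoidSupportPoint, inner_add_right, real_inner_smul_right, inner_toLp_mulVec]
  change _ + c / _ * quadForm d S u = _
  rw [div_mul_eq_mul_div, mul_div_assoc, Real.div_sqrt]

lemma le_halfspaceDepth_ellipsoidSupportPoint (hS : S.PosDef)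
    (hμ : ∀ v, μ.map (fun x => ⟪v, x⟫) = gaussianReal ⟪v, m⟫ (quadForm d S v).toNNReal)
    {u : EuclideanSpace ℝ (Fin d)} (hu : u ≠ 0) {c : ℝ} (hc : 0 ≤ c) :
    stdGaussianCDF (-c) ≤ halfspaceDepth d μ (ellipsoidSupportPoint m S u c) := by
  have : Nontrivial (EuclideanSpace ℝ (Fin d)) := nontrivial_of_ne u 0 hu
  have : Nonempty (Metric.sphere (0 : EuclideanSpace ℝ (Fin d)) 1) :=
    (NormedSpace.sphere_nonempty.2 zero_le_one).to_subtype
  refine le_halfspaceDepth fun v hv => ?_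
  set σu := Real.sqrt (quadForm d S u)
  have hσu : 0 < σu := Real.sqrt_pos.2 (quadForm_pos hS hu)
  have hqv := quadForm_pos hS (ne_zero_of_mem_unit_sphere ⟨v, hv⟩)
  set σv := Real.sqrt (quadForm d S v)
  have hcs : |v.ofLp ⬝ᵥ S *ᵥ u.ofLp| ≤ σv * σu :=
    hS.posSemidef.abs_dotProduct_mulVec_le v.ofLp u.ofLp
  rw [toReal_measure_halfspace (hμ v) hqv]
  refine strictMono_stdGaussianCDF.monotone ?_
  rw [ellipsoidSupportPoint, inner_add_right, real_inner_smul_right, inner_toLp_mulVec,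
    add_sub_cancel_left, le_div_iff₀ (Real.sqrt_pos.2 hqv)]
  calc -c * σv = c / σu * -(σv * σu) := by field_simp
    _ ≤ c / σu * (v.ofLp ⬝ᵥ S *ᵥ u.ofLp) := by gcongr; exact neg_le_of_abs_le hcs

end Gaussian

theorem stmt_17_general (d : ℕ)
    (m : EuclideanSpace ℝ (Fin d)) (S : Matrix (Fin d) (Fin d) ℝ) (hS : S.PosDef)
    (μ : Measure (EuclideanSpace ℝ (Fin d)))
    -- `μ = N(m, Σ)`: every one-dimensional projection is Gaussian
    (hμ : ∀ u : EuclideanSpace ℝ (Fin d),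
      Measure.map (fun x => ⟪u, x⟫) μ =
        gaussianReal ⟪u, m⟫ (Real.toNNReal (quadForm d S u)))
    (α : ℝ) (hα : α ∈ Set.Ioc (0 : ℝ) (1 / 2)) :
    ∀ u ∈ Metric.sphere (0 : EuclideanSpace ℝ (Fin d)) 1,
      sSup ((fun x => ⟪u, x⟫) '' hdRegion d μ α) =
        ⟪u, m⟫ + stdGaussianQuantile (1 - α) * Real.sqrt (quadForm d S u) := by
  intro u hu
  obtain ⟨hα0, hα2⟩ := hα
  have hu0 : u ≠ 0 := ne_zero_of_mem_unit_sphere ⟨u, hu⟩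
  set c := stdGaussianQuantile (1 - α)
  have hc : 0 ≤ c := stdGaussianQuantile_nonneg (by linarith) (by linarith)
  have hdepth : stdGaussianCDF (-c) = α := by
    rw [stdGaussianCDF_neg, stdGaussianCDF_stdGaussianQuantile (by linarith) (by linarith)]
    ring
  refine IsGreatest.csSup_eq ⟨⟨ellipsoidSupportPoint m S u c, ?_,
    inner_ellipsoidSupportPoint u c⟩, ?_⟩
  · exact hdepth ▸ le_halfspaceDepth_ellipsoidSupportPoint hS hμ hu0 hc
  · rintro _ ⟨x, hx, rfl⟩
    exact inner_le_of_mem_hdRegion hS hμ hα0 (by linarith) hu hx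

theorem stmt_17 (d : ℕ)
    (m : EuclideanSpace ℝ (Fin d)) (S : Matrix (Fin d) (Fin d) ℝ) (hS : S.PosDef)
    (μ : Measure (EuclideanSpace ℝ (Fin d))) [IsProbabilityMeasure μ]
    -- `μ = N(m, Σ)`: every one-dimensional projection is Gaussian
    (hμ : ∀ u : EuclideanSpace ℝ (Fin d),
      Measure.map (fun x => ⟪u, x⟫) μ =
        gaussianReal ⟪u, m⟫ (Real.toNNReal (quadForm d S u)))
    (α : ℝ) (hα : α ∈ Set.Ioc (0 : ℝ) (1 / 2)) :
    ∀ u ∈ Metric.sphere (0 : EuclideanSpace ℝ (Fin d)) 1,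
      sSup ((fun x => ⟪u, x⟫) '' hdRegion d μ α) =
        ⟪u, m⟫ + stdGaussianQuantile (1 - α) * Real.sqrt (quadForm d S u) :=
  stmt_17_general d m S hS μ hμ α hα
end
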